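/- arXiv:2505.01131 — 2 statements merged into one kernel-verified Lean document; each statement's English description precedes it below -/
import Mathlib

section
/- For any family F ⊆ A^n and any a < b in A, the compressed family C^{a,b}F = C^{a,b}_1 ⋯ C^{a,b}_n F satisfies Δ(C^{a,b}F) ⊆ C^{a,b}(ΔF), and hence |Δ(C^{a,b}F)| ≤ |ΔF|. -/
open Finset

/-- Deletion shadow in direction `i`: delete the `i`-th coordinate of each word. -/
def delShadow {r n : ℕ} (i : Fin (n+1)) (F : Finset (Fin (n+1) → Fin r)) :
    Finset (Fin n → Fin r) :=
  F.image (fun w => Fin.removeNth i w)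

/-- Full deletion shadow: union of the coordinate deletion shadows. -/
def fullShadow {r n : ℕ} (F : Finset (Fin (n+1) → Fin r)) : Finset (Fin n → Fin r) :=
  Finset.univ.biUnion (fun i => delShadow i F)

/-- The compression `C^{a,b}_i`: each word with letter `b` in coordinate `i` is
replaced by the word with letter `a` there instead, unless that word is already
in the family. -/
def comp {r n : ℕ} (a b : Fin r) (i : Fin n) (F : Finset (Fin n → Fin r)) :
    Finset (Fin n → Fin r) :=
  (F.filter (fun x => x i ≠ b ∨ Function.update x i a ∈ F)) ∪
    ((F.filter (fun x => x i = b ∧ Function.update x i a ∉ F)).image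
      (fun x => Function.update x i a))

/-- `C^{a,b} = C^{a,b}_1 ⋯ C^{a,b}_n`: the composition of the coordinate
compressions over all coordinates (coordinate `n` applied first). -/
def compAll {r n : ℕ} (a b : Fin r) (F : Finset (Fin n → Fin r)) :
    Finset (Fin n → Fin r) :=
  (List.finRange n).foldr (fun i G => comp a b i G) F

/-!
Deleting a coordinate `j` nearly commutes with the compressions: `C_j` becomes invisible once `j`
is deleted, and `Δ_j (C_{j.succAbove k} G) ⊆ C_k (Δ_j G)`. Since `succAbove` is increasing, the
compressions left after dropping `C_j` from `C^{a,b} = C_1 ⋯ C_{n+1}` turn into `C_1 ⋯ C_n` in the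
same order, so monotonicity of compressions gives
`Δ_j (C^{a,b} F) ⊆ C^{a,b} (Δ_j F) ⊆ C^{a,b} (Δ F)`. Each compression preserves cardinality,
whence the bound.
-/

open Function hiding comp

namespace List

lemma filterMap_finSuccEquiv'_finRange {n : ℕ} (j : Fin (n + 1)) :
    (finRange (n + 1)).filterMap (finSuccEquiv' j) = finRange n := by
  refine SortedLT.eq_of_mem_iff ?_ (sortedLT_finRange n) fun k => ?_
  · rw [sortedLT_iff_pairwise, pairwise_filterMap]
    refine (sortedLT_finRange _).pairwise.imp fun {p q} hpq x hx y hy => ?_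
    obtain rfl : p = j.succAbove x := finSuccEquiv'_eq_some.mp hx
    obtain rfl : q = j.succAbove y := finSuccEquiv'_eq_some.mp hy
    exact Fin.succAbove_lt_succAbove_iff.mp hpq
  · simp

end List

section

variable {r n : ℕ} {a b : Fin r}

lemma comp_mono {i : Fin n} {F F' : Finset (Fin n → Fin r)} (h : F ⊆ F') :
    comp a b i F ⊆ comp a b i F' := by
  intro y hy
  simp only [comp, mem_union, mem_filter, mem_image] at hy ⊢
  rcases hy with ⟨hyF, hyb | hyF'⟩ | ⟨x, ⟨hxF, hxb, -⟩, rfl⟩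
  · exact Or.inl ⟨h hyF, Or.inl hyb⟩
  · exact Or.inl ⟨h hyF, Or.inr (h hyF')⟩
  · by_cases hx' : update x i a ∈ F'
    · exact Or.inl ⟨hx', Or.inr (by rwa [update_idem])⟩
    · exact Or.inr ⟨x, ⟨h hxF, hxb, hx'⟩, rfl⟩

lemma compAll_mono {F F' : Finset (Fin n → Fin r)} (h : F ⊆ F') :
    compAll a b F ⊆ compAll a b F' := by
  unfold compAll
  induction List.finRange n with
  | nil => exact h
  | cons i L ih => exact comp_mono ih

lemma update_injOn_of_apply_eq (i : Fin n) :
    Set.InjOn (fun x : Fin n → Fin r => update x i a) {x | x i = b} := by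
  intro x (hx : x i = b) y (hy : y i = b) (hxy : update x i a = update y i a)
  calc x = update (update x i a) i b := by rw [update_idem, ← hx, update_eq_self]
    _ = update (update y i a) i b := by rw [hxy]
    _ = y := by rw [update_idem, ← hy, update_eq_self]

lemma card_comp (i : Fin n) (F : Finset (Fin n → Fin r)) : #(comp a b i F) = #F := by
  rw [comp, card_union_of_disjoint, card_image_of_injOn]
  · simpa only [not_or, not_not] using
      card_filter_add_card_filter_not (s := F) (fun x => x i ≠ b ∨ update x i a ∈ F)
  · exact (update_injOn_of_apply_eq i).mono fun x hx => (mem_filter.mp (mem_coe.mp hx)).2.1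
  · refine disjoint_left.mpr fun y hy hy' => ?_
    obtain ⟨x, hx, rfl⟩ := mem_image.mp hy'
    obtain ⟨-, -, hxF⟩ := mem_filter.mp hx
    exact hxF (mem_filter.mp hy).1

lemma card_compAll (F : Finset (Fin n → Fin r)) : #(compAll a b F) = #F := by
  unfold compAll
  induction List.finRange n with
  | nil => rfl
  | cons i L ih => rw [List.foldr_cons, card_comp, ih]

lemma removeNth_mem_delShadow {j : Fin (n + 1)} {G : Finset (Fin (n + 1) → Fin r)}
    {w : Fin (n + 1) → Fin r} (h : w ∈ G) : Fin.removeNth j w ∈ delShadow j G :=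
  mem_image_of_mem _ h

lemma delShadow_comp_self (j : Fin (n + 1)) (G : Finset (Fin (n + 1) → Fin r)) :
    delShadow j (comp a b j G) ⊆ delShadow j G := by
  intro z hz
  obtain ⟨w, hw, rfl⟩ := mem_image.mp hz
  simp only [comp, mem_union, mem_filter, mem_image] at hw
  rcases hw with ⟨hwG, -⟩ | ⟨x, ⟨hxG, -, -⟩, rfl⟩
  · exact removeNth_mem_delShadow hwG
  · simpa using removeNth_mem_delShadow (j := j) hxG

lemma delShadow_comp_succAbove (j : Fin (n + 1)) (k : Fin n) (G : Finset (Fin (n + 1) → Fin r)) :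
    delShadow j (comp a b (j.succAbove k) G) ⊆ comp a b k (delShadow j G) := by
  intro z hz
  obtain ⟨w, hw, rfl⟩ := mem_image.mp hz
  simp only [comp, mem_union, mem_filter, mem_image] at hw ⊢
  rcases hw with ⟨hwG, hwb | hwG'⟩ | ⟨x, ⟨hxG, hxb, hx'⟩, rfl⟩
  · exact Or.inl ⟨removeNth_mem_delShadow hwG, Or.inl hwb⟩
  · refine Or.inl ⟨removeNth_mem_delShadow hwG, Or.inr ?_⟩
    simpa using removeNth_mem_delShadow (j := j) hwG'
  · rw [Fin.removeNth_update_succAbove]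
    by_cases hz' : update (Fin.removeNth j x) k a ∈ delShadow j G
    · exact Or.inl ⟨hz', Or.inr (by rwa [update_idem])⟩
    · exact Or.inr ⟨Fin.removeNth j x, ⟨removeNth_mem_delShadow hxG, hxb, hz'⟩, rfl⟩

lemma delShadow_foldr_comp_subset (j : Fin (n + 1)) (L : List (Fin (n + 1)))
    (F : Finset (Fin (n + 1) → Fin r)) :
    delShadow j (L.foldr (comp a b) F) ⊆
      (L.filterMap (finSuccEquiv' j)).foldr (comp a b) (delShadow j F) := by
  induction L with
  | nil => exact Subset.rfl
  | cons i L ih =>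
    rcases eq_or_ne i j with rfl | hij
    · rw [List.filterMap_cons, finSuccEquiv'_at]
      exact (delShadow_comp_self i _).trans ih
    · obtain ⟨k, rfl⟩ := Fin.exists_succAbove_eq hij
      rw [List.filterMap_cons, finSuccEquiv'_succAbove]
      exact (delShadow_comp_succAbove j k _).trans (comp_mono ih)

lemma delShadow_compAll_subset (j : Fin (n + 1)) (F : Finset (Fin (n + 1) → Fin r)) :
    delShadow j (compAll a b F) ⊆ compAll a b (delShadow j F) := by
  simpa only [compAll, List.filterMap_finSuccEquiv'_finRange] using
    delShadow_foldr_comp_subset (a := a) (b := b) j (List.finRange (n + 1)) F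

lemma fullShadow_compAll_subset (F : Finset (Fin (n + 1) → Fin r)) :
    fullShadow (compAll a b F) ⊆ compAll a b (fullShadow F) :=
  biUnion_subset.mpr fun j _ =>
    (delShadow_compAll_subset j F).trans
      (compAll_mono (subset_biUnion_of_mem (delShadow · F) (mem_univ j)))

end

theorem shadow_compAll_general (r n : ℕ) (a b : Fin r)
    (F : Finset (Fin (n+1) → Fin r)) :
    fullShadow (compAll a b F) ⊆ compAll a b (fullShadow F) ∧
      (fullShadow (compAll a b F)).card ≤ (fullShadow F).card :=
  ⟨fullShadow_compAll_subset F,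
    (card_le_card (fullShadow_compAll_subset F)).trans_eq (card_compAll _)⟩

/-- `Δ(C^{a,b}F) ⊆ C^{a,b}(ΔF)`, and hence `|Δ(C^{a,b}F)| ≤ |ΔF|`. -/
theorem shadow_compAll (r n : ℕ) (a b : Fin r) (hab : a < b)
    (F : Finset (Fin (n+1) → Fin r)) :
    fullShadow (compAll a b F) ⊆ compAll a b (fullShadow F) ∧
      (fullShadow (compAll a b F)).card ≤ (fullShadow F).card :=
  shadow_compAll_general r n a b F
end

section
/- If f : A^n → [0,1] is an s-compressed fractional family with weight |f| ≤ s^n, and h is the fractional Hamming ball b^{(n,s)}_{k,α} on A^n with the same weight as f, then |Δf| ≥ |Δh|. -/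
open Finset

/-- Number of occurrences of the top symbol `s` (represented 0-indexed as the
letter of value `s-1`) in the word `w`. -/
def countTop {r n : ℕ} (s : ℕ) (w : Fin n → Fin r) : ℕ :=
  (Finset.univ.filter (fun i => (w i : ℕ) = s - 1)).card

/-- The Hamming ball `B^{(n,s)}(k)`: words of `[s]^n` (letters 0-indexed, so
letters of value `< s`) containing the symbol `s` (value `s-1`) at most `k` times. -/
def hammingBall (r n s k : ℕ) : Finset (Fin n → Fin r) :=
  Finset.univ.filter (fun w => (∀ i, (w i : ℕ) < s) ∧ countTop s w ≤ k)

/-- The fractional deletion shadow: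
`(Δf)(x₁,…,x_{n-1}) = max_{y ∈ A, i ∈ [n]} f(x₁,…,x_{i-1},y,x_i,…,x_{n-1})`. -/
noncomputable def fracShadow {r n : ℕ} (f : (Fin (n+1) → Fin r) → ℝ) :
    (Fin n → Fin r) → ℝ :=
  fun w => ⨆ p : Fin (n+1) × Fin r, f (Fin.insertNth p.1 p.2 w)

/-- The fractional Hamming ball `b^{(n,s)}_{k,α}`: value `1` on words of `[s]^n`
containing the symbol `s` (0-indexed: value `s-1`) at most `k` times, value `α`
on words of `[s]^n` containing it exactly `k+1` times, and `0` otherwise. -/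
noncomputable def fracBall (r n s k : ℕ) (α : ℝ) : (Fin n → Fin r) → ℝ :=
  fun w =>
    if (∀ i, (w i : ℕ) < s) then
      (if countTop s w ≤ k then 1 else if countTop s w = k + 1 then α else 0)
    else 0

/-- A fractional family is `s`-compressed if whenever `f(x₁,…,xₙ) > 0` and
`y < x_i` with `s ≤ x_i` (symbols `1,…,r` being represented 0-indexed, so the
symbol condition reads `s ≤ (x_i) + 1`), the word with `x_i` replaced by `y`
has `f`-value `1`. -/
def SCompressed {r n : ℕ} (s : ℕ) (f : (Fin n → Fin r) → ℝ) : Prop :=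
  ∀ (x : Fin n → Fin r) (i : Fin n) (y : Fin r),
    f x > 0 → y < x i → s ≤ (x i : ℕ) + 1 → f (Function.update x i y) = 1

/-!
Give every word of `[s]^m` with `j` occurrences of the top symbol the value `ψ j`; the weight of
this family is `∑ j, C(m, j) (s - 1)^(m - j) ψ j`, and the fractional Hamming balls are the
threshold profiles `ψ`. For `s ≥ 2` we show by induction on `n`, for every antitone `ψ` with
values in `[0, 1]`, that an `s`-compressed `f` on `A^(n+1)` at least as heavy as the
`(n+1)`-dimensional family has a shadow at least as heavy as the `n`-dimensional one; the shadow
of the ball is dominated pointwise by the `n`-dimensional ball.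

In the induction step `f` is cut into slices along the first coordinate. Compression makes the
slice weights decrease from the top symbol on. The induction hypothesis bounds the shadow of each
slice below by `G` of its weight, where `G` is the concave piecewise linear function through the
(weight of a ball, weight of the same ball one dimension lower) points, and a chord argument for
`G` sums these bounds. For `s = 1` the ball lives on one word, and compression forces `f` to take
the value `1` somewhere unless it lives on that same word.
-/

/-- The number of words of `[s]^m` in which the top symbol occurs exactly `j` times. -/
noncomputable def layerSize (s m j : ℕ) : ℝ := (m.choose j : ℝ) * ((s : ℝ) - 1) ^ (m - j)

/-- The weight of the fractional family on `[s]^m` that gives every word with exactly `j`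
occurrences of the top symbol the value `ψ j`. -/
noncomputable def layerSum (s m : ℕ) (ψ : ℕ → ℝ) : ℝ :=
  ∑ j ∈ range (m + 1), layerSize s m j * ψ j

/-- The profile of the fractional Hamming ball `b_{K-1,α}`. -/
noncomputable def thresholdProfile (K : ℕ) (α : ℝ) (j : ℕ) : ℝ :=
  if j < K then 1 else if j = K then α else 0

section LayerSize

variable {s m j : ℕ}

lemma layerSize_nonneg (hs : 1 ≤ s) (m j : ℕ) : 0 ≤ layerSize s m j := by
  have : (1 : ℝ) ≤ s := by exact_mod_cast hs
  unfold layerSize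
  have : (0 : ℝ) ≤ (s : ℝ) - 1 := by linarith
  positivity

lemma layerSize_pos (hs : 2 ≤ s) (hj : j ≤ m) : 0 < layerSize s m j := by
  have : (2 : ℝ) ≤ s := by exact_mod_cast hs
  have : (0 : ℝ) < (s : ℝ) - 1 := by linarith
  have : (0 : ℝ) < m.choose j := by exact_mod_cast Nat.choose_pos hj
  unfold layerSize
  positivity

lemma layerSize_eq_zero (h : m < j) : layerSize s m j = 0 := by
  simp [layerSize, Nat.choose_eq_zero_of_lt h]

lemma layerSize_succ_zero (s m : ℕ) : layerSize s (m + 1) 0 = ((s : ℝ) - 1) * layerSize s m 0 := by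
  simp [layerSize, pow_succ, mul_comm]

lemma layerSize_succ_succ (s m j : ℕ) :
    layerSize s (m + 1) (j + 1) = ((s : ℝ) - 1) * layerSize s m (j + 1) + layerSize s m j := by
  unfold layerSize
  rcases lt_trichotomy j m with h | rfl | h
  · rw [Nat.choose_succ_succ, Nat.add_sub_add_right, show m - j = m - (j + 1) + 1 by omega,
      pow_succ]
    push_cast
    ring
  · simp
  · simp [Nat.choose_eq_zero_of_lt h, Nat.choose_eq_zero_of_lt (Nat.succ_lt_succ h),
      Nat.choose_eq_zero_of_lt (h.trans (Nat.lt_succ_self j))]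

lemma choose_mul_choose_succ_le {n c j : ℕ} (hcj : c ≤ j) :
    n.choose j * (n + 1).choose c ≤ n.choose c * (n + 1).choose j := by
  refine Nat.le_of_mul_le_mul_right ?_ (Nat.succ_pos n)
  calc n.choose j * (n + 1).choose c * (n + 1)
      = (n.choose j * (n + 1)) * (n + 1).choose c := by ring
    _ = (n + 1).choose j * ((n + 1).choose c * (n + 1 - j)) := by
      rw [Nat.choose_mul_succ_eq]; ring
    _ ≤ (n + 1).choose j * ((n + 1).choose c * (n + 1 - c)) := by gcongr
    _ = n.choose c * (n + 1).choose j * (n + 1) := by rw [← Nat.choose_mul_succ_eq]; ring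

lemma layerSize_mul_le (hs : 1 ≤ s) {n c j : ℕ} (hcj : c ≤ j) :
    layerSize s n j * layerSize s (n + 1) c ≤ layerSize s n c * layerSize s (n + 1) j := by
  rcases le_or_gt j n with hj | hj
  · have hc : ((n.choose j * (n + 1).choose c : ℕ) : ℝ) ≤ (n.choose c * (n + 1).choose j : ℕ) := by
      exact_mod_cast choose_mul_choose_succ_le hcj
    have : (1 : ℝ) ≤ s := by exact_mod_cast hs
    have : (0 : ℝ) ≤ (s : ℝ) - 1 := by linarith
    push_cast at hc
    unfold layerSize
    calc (n.choose j : ℝ) * ((s : ℝ) - 1) ^ (n - j) *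
          ((n + 1).choose c * ((s : ℝ) - 1) ^ (n + 1 - c))
        = (n.choose j * (n + 1).choose c) * ((s : ℝ) - 1) ^ ((n - c) + (n + 1 - j)) := by
          rw [show (n - c) + (n + 1 - j) = (n - j) + (n + 1 - c) by omega, pow_add]; ring
      _ ≤ (n.choose c * (n + 1).choose j) * ((s : ℝ) - 1) ^ ((n - c) + (n + 1 - j)) := by gcongr
      _ = _ := by rw [pow_add]; ring
  · rw [layerSize_eq_zero hj, zero_mul]
    exact mul_nonneg (layerSize_nonneg hs _ _) (layerSize_nonneg hs _ _)

end LayerSize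

section LayerSum

variable {s m : ℕ} {ψ φ : ℕ → ℝ}

lemma layerSum_eq_sum_range {N : ℕ} (hN : m < N) (ψ : ℕ → ℝ) :
    layerSum s m ψ = ∑ j ∈ range N, layerSize s m j * ψ j := by
  refine sum_subset (range_subset_range.2 hN) fun j _ hj => ?_
  rw [layerSize_eq_zero (by simpa using hj), zero_mul]

lemma layerSum_zero (s : ℕ) (ψ : ℕ → ℝ) : layerSum s 0 ψ = ψ 0 := by
  simp [layerSum, layerSize]

lemma layerSum_succ (s m : ℕ) (ψ : ℕ → ℝ) :
    layerSum s (m + 1) ψ = ((s : ℝ) - 1) * layerSum s m ψ + layerSum s m (fun j => ψ (j + 1)) := by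
  rw [layerSum, sum_range_succ', layerSum_eq_sum_range (show m < m + 2 by omega) ψ,
    sum_range_succ' _ (m + 1)]
  simp only [layerSize_succ_succ, layerSize_succ_zero, add_mul, sum_add_distrib, mul_add, mul_sum,
    mul_assoc, layerSum]
  ring

lemma layerSum_mono (hs : 1 ≤ s) (h : ∀ j, ψ j ≤ φ j) : layerSum s m ψ ≤ layerSum s m φ :=
  sum_le_sum fun j _ => mul_le_mul_of_nonneg_left (h j) (layerSize_nonneg hs m j)

lemma layerSum_nonneg (hs : 1 ≤ s) (h : ∀ j, 0 ≤ ψ j) : 0 ≤ layerSum s m ψ := by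
  simpa [layerSum] using layerSum_mono (m := m) hs h

lemma layerSum_one (s m : ℕ) : layerSum s m (fun _ => 1) = (s : ℝ) ^ m := by
  simp only [layerSum, layerSize, mul_one]
  rw [show (s : ℝ) = 1 + ((s : ℝ) - 1) by ring, add_pow]
  simp [mul_comm]

lemma layerSum_le_pow (hs : 1 ≤ s) (h : ∀ j, ψ j ≤ 1) : layerSum s m ψ ≤ (s : ℝ) ^ m :=
  (layerSum_mono hs h).trans_eq (layerSum_one s m)

lemma layerSum_threshold (s m K : ℕ) (α : ℝ) :
    layerSum s m (thresholdProfile K α) = ∑ j ∈ range K, layerSize s m j + α * layerSize s m K := by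
  rw [layerSum_eq_sum_range (show m < K + 1 + (m + 1) by omega), sum_range_add, sum_range_succ]
  have hK : ∀ j ∈ range K, layerSize s m j * thresholdProfile K α j = layerSize s m j := by
    intro j hj
    simp [thresholdProfile, mem_range.1 hj]
  have hbig : ∀ j ∈ range (m + 1),
      layerSize s m (K + 1 + j) * thresholdProfile K α (K + 1 + j) = 0 := by
    intro j _
    simp [thresholdProfile, show ¬ K + 1 + j < K by omega, show K + 1 + j ≠ K by omega]
  rw [sum_congr rfl hK, sum_congr rfl hbig]
  simp [thresholdProfile, mul_comm]

end LayerSum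

lemma thresholdProfile_nonneg {α : ℝ} (hα : 0 ≤ α) (K j : ℕ) : 0 ≤ thresholdProfile K α j := by
  unfold thresholdProfile; split_ifs <;> norm_num [hα]

lemma thresholdProfile_le_one {α : ℝ} (hα : α ≤ 1) (K j : ℕ) : thresholdProfile K α j ≤ 1 := by
  unfold thresholdProfile; split_ifs <;> norm_num [hα]

lemma thresholdProfile_antitone {α : ℝ} (hα0 : 0 ≤ α) (hα1 : α ≤ 1) (K : ℕ) :
    Antitone (thresholdProfile K α) := by
  intro i j hij
  unfold thresholdProfile
  split_ifs <;> first | (exfalso; omega) | linarith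

/-- The line extending the `c`-th segment of `shadowProfile s n`. -/
noncomputable def profileLine (s n c : ℕ) (t : ℝ) : ℝ :=
  ∑ j ∈ range c, layerSize s n j +
    (t - ∑ j ∈ range c, layerSize s (n + 1) j) * (layerSize s n c / layerSize s (n + 1) c)

/-- The piecewise linear function sending the weight of a fractional Hamming ball of dimension
`n + 1` to the weight of the ball of dimension `n` of the same profile. -/
noncomputable def shadowProfile (s n : ℕ) (t : ℝ) : ℝ :=
  (range (n + 2)).inf' nonempty_range_add_one fun c => profileLine s n c t

section ShadowProfile

variable {s n : ℕ}

lemma shadowProfile_le_profileLine {c : ℕ} (hc : c ≤ n + 1) (t : ℝ) :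
    shadowProfile s n t ≤ profileLine s n c t :=
  inf'_le _ (mem_range.2 (Nat.lt_succ_of_le hc))

lemma monotone_shadowProfile (hs : 1 ≤ s) : Monotone (shadowProfile s n) := by
  intro t t' htt'
  refine le_inf' _ _ fun c hc => (inf'_le _ hc).trans ?_
  have : 0 ≤ layerSize s n c / layerSize s (n + 1) c :=
    div_nonneg (layerSize_nonneg hs _ _) (layerSize_nonneg hs _ _)
  unfold profileLine
  gcongr

lemma concaveOn_shadowProfile (s n : ℕ) : ConcaveOn ℝ Set.univ (shadowProfile s n) := by
  refine ⟨convex_univ, fun x _ y _ a b ha hb hab => le_inf' _ _ fun c hc => ?_⟩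
  have hline : profileLine s n c (a • x + b • y) =
      a * profileLine s n c x + b * profileLine s n c y := by
    simp only [profileLine, smul_eq_mul]
    linear_combination (∑ j ∈ range c, layerSize s n j -
      (∑ j ∈ range c, layerSize s (n + 1) j) * (layerSize s n c / layerSize s (n + 1) c)) * hab.symm
  rw [hline, smul_eq_mul, smul_eq_mul]
  gcongr <;> exact inf'_le _ hc

lemma sum_range_layerSize_eq_layerSum (s m c : ℕ) :
    ∑ j ∈ range c, layerSize s m j = layerSum s m (thresholdProfile c 0) := by
  simp [layerSum_threshold]

lemma layerSum_le_shadowProfile (hs : 2 ≤ s) {ψ : ℕ → ℝ} (hψ0 : ∀ j, 0 ≤ ψ j)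
    (hψ1 : ∀ j, ψ j ≤ 1) : layerSum s n ψ ≤ shadowProfile s n (layerSum s (n + 1) ψ) := by
  refine le_inf' _ _ fun c hc => ?_
  have hc : c ≤ n + 1 := Nat.lt_succ_iff.1 (mem_range.1 hc)
  have hpos := layerSize_pos hs hc
  obtain ⟨ρ, hρ⟩ : ∃ ρ, layerSize s n c / layerSize s (n + 1) c = ρ := ⟨_, rfl⟩
  obtain ⟨χ, hχ⟩ : ∃ χ, thresholdProfile c 0 = χ := ⟨_, rfl⟩
  -- The line minus the family is a sum of terms whose two factors have the same sign.
  have key : profileLine s n c (layerSum s (n + 1) ψ) - layerSum s n ψ =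
      ∑ j ∈ range (n + 2), (ρ * layerSize s (n + 1) j - layerSize s n j) * (ψ j - χ j) := by
    simp only [profileLine, sum_range_layerSize_eq_layerSum, hρ, hχ,
      layerSum_eq_sum_range (show n < n + 2 by omega),
      layerSum_eq_sum_range (show n + 1 < n + 2 by omega), mul_sub, sub_mul, sum_sub_distrib,
      mul_assoc, ← mul_sum]
    ring
  have hterm : ∀ j ∈ range (n + 2),
      0 ≤ (ρ * layerSize s (n + 1) j - layerSize s n j) * (ψ j - χ j) := by
    intro j _
    rcases lt_or_ge j c with hjc | hcj
    · have h := layerSize_mul_le (by omega : 1 ≤ s) (n := n) hjc.le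
      have : ρ * layerSize s (n + 1) j ≤ layerSize s n j := by
        rw [← hρ, div_mul_eq_mul_div, div_le_iff₀ hpos]; linarith
      have : χ j = 1 := by simp [← hχ, thresholdProfile, hjc]
      exact mul_nonneg_of_nonpos_of_nonpos (by linarith) (by linarith [hψ1 j])
    · have h := layerSize_mul_le (by omega : 1 ≤ s) (n := n) hcj
      have : layerSize s n j ≤ ρ * layerSize s (n + 1) j := by
        rw [← hρ, div_mul_eq_mul_div, le_div_iff₀ hpos]; linarith
      have : χ j = 0 := by simp [← hχ, thresholdProfile, hcj.not_gt]
      exact mul_nonneg (by linarith) (by linarith [hψ0 j])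
  linarith [sum_nonneg hterm]

lemma shadowProfile_zero (hs : 2 ≤ s) : shadowProfile s n 0 = 0 := by
  refine le_antisymm
    ((shadowProfile_le_profileLine (Nat.zero_le _) 0).trans_eq (by simp [profileLine])) ?_
  simpa [layerSum] using layerSum_le_shadowProfile (n := n) hs (ψ := 0) (fun _ => le_rfl)
    (fun _ => zero_le_one)

lemma shadowProfile_layerSum_threshold_le (hs : 2 ≤ s) {K : ℕ} (hK : K ≤ n + 1) (α : ℝ) :
    shadowProfile s n (layerSum s (n + 1) (thresholdProfile K α)) ≤
      layerSum s n (thresholdProfile K α) := by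
  refine (shadowProfile_le_profileLine hK _).trans_eq ?_
  have := (layerSize_pos hs hK).ne'
  rw [profileLine, layerSum_threshold, layerSum_threshold]
  field_simp
  ring

lemma exists_layerSum_threshold_eq (hs : 2 ≤ s) {t : ℝ} (ht0 : 0 ≤ t) (ht : t ≤ (s : ℝ) ^ (n + 1)) :
    ∃ K α, K ≤ n + 1 ∧ 0 ≤ α ∧ α ≤ 1 ∧ layerSum s (n + 1) (thresholdProfile K α) = t := by
  set S : ℕ → ℝ := fun K => ∑ j ∈ range K, layerSize s (n + 1) j
  set K := Nat.findGreatest (fun K => S K ≤ t) (n + 1)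
  have hK : K ≤ n + 1 := Nat.findGreatest_le _
  have hSK : S K ≤ t := Nat.findGreatest_spec (P := fun K => S K ≤ t) (Nat.zero_le _) (by simpa [S])
  have hnext : t ≤ S (K + 1) := by
    rcases hK.lt_or_eq with hlt | heq
    · exact (not_le.1 (Nat.findGreatest_is_greatest (P := fun K => S K ≤ t)
        (Nat.lt_succ_self K) hlt)).le
    · have : S (n + 2) = (s : ℝ) ^ (n + 1) := by simpa [S, layerSum] using layerSum_one s (n + 1)
      rwa [heq, this]
  have hB := layerSize_pos hs hK
  refine ⟨K, (t - S K) / layerSize s (n + 1) K, hK, div_nonneg (by linarith) hB.le, ?_, ?_⟩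
  · rw [div_le_one hB]
    simp only [S, sum_range_succ] at hnext
    linarith
  · rw [layerSum_threshold, div_mul_cancel₀ _ hB.ne']
    ring

end ShadowProfile

lemma ConcaveOn.sub_mul_add_sub_mul_le {D : Set ℝ} {G : ℝ → ℝ} (hG : ConcaveOn ℝ D G) {a b c : ℝ}
    (ha : a ∈ D) (hc : c ∈ D) (hab : a ≤ b) (hbc : b ≤ c) :
    (c - b) * G a + (b - a) * G c ≤ (c - a) * G b := by
  rcases hab.lt_or_eq with hab | rfl
  · have hac : 0 < c - a := by linarith
    have hne := hac.ne'
    have h := hG.2 ha hc (div_nonneg (sub_nonneg.2 hbc) hac.le)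
      (div_nonneg (sub_nonneg.2 hab.le) hac.le) (by field_simp; ring)
    have hb : ((c - b) / (c - a)) • a + ((b - a) / (c - a)) • c = b := by
      simp only [smul_eq_mul]; field_simp; ring
    rw [hb, smul_eq_mul, smul_eq_mul] at h
    have := mul_le_mul_of_nonneg_left h hac.le
    rwa [mul_add, ← mul_assoc, ← mul_assoc, mul_div_cancel₀ _ hne, mul_div_cancel₀ _ hne] at this
  · simp

lemma ConcaveOn.mul_le_mul_of_map_zero {G : ℝ → ℝ} (hG : ConcaveOn ℝ (Set.Ici 0) G) (hG0 : G 0 = 0)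
    {x y : ℝ} (hx : 0 ≤ x) (hxy : x ≤ y) :
    x * G y ≤ y * G x := by
  have := hG.sub_mul_add_sub_mul_le Set.self_mem_Ici (Set.mem_Ici.2 (hx.trans hxy)) hx hxy
  rw [hG0] at this
  linarith

/-- The line through `(C, G C)` with the slope of the chord of `G` over `[τ, T]` stays below the ray
from the origin through `(τ, G τ)` at every `h ≥ max τ C`. -/
lemma ConcaveOn.add_mul_sub_le_div_mul {G : ℝ → ℝ} (hG : ConcaveOn ℝ (Set.Ici 0) G)
    (hG0 : G 0 = 0) {τ T C h σ : ℝ} (hτ : 0 < τ) (hτT : τ < T) (hσ : σ * (T - τ) = G T - G τ)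
    (hC0 : 0 ≤ C) (hτh : τ ≤ h) (hCh : C ≤ h) : G C + σ * (h - C) ≤ h / τ * G τ := by
  have hτσ : τ * σ ≤ G τ := by
    have := hG.mul_le_mul_of_map_zero hG0 hτ.le hτT.le
    nlinarith
  rw [div_mul_eq_mul_div, le_div_iff₀ hτ]
  rcases le_or_gt C τ with hCτ | hτC
  · have := hG.sub_mul_add_sub_mul_le (Set.mem_Ici.2 hC0) (Set.mem_Ici.2 (by linarith)) hCτ hτT.le
    have : σ * (τ - C) ≤ G τ - G C := by nlinarith
    nlinarith
  · have := hG.mul_le_mul_of_map_zero hG0 hτ.le hτC.le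
    nlinarith

/-- Compare `G` with its chord over `[τ, T]`: on the `Lo` values it lies above the chord, and the
mass of the `Hi` values, all in `[0, τ]`, is worth at least `G τ / τ` per unit. -/
lemma ConcaveOn.card_mul_add_le_sum {G : ℝ → ℝ} (hG : ConcaveOn ℝ (Set.Ici 0) G) (hG0 : G 0 = 0)
    (hGm : MonotoneOn G (Set.Ici 0)) {ι : Type*}
    {Lo Hi : Finset ι} {t : ι → ℝ} {τ T C : ℝ} (hτ : 0 < τ) (hτT : τ < T) (hC0 : 0 ≤ C)
    (hLo : ∀ z ∈ Lo, τ ≤ t z ∧ t z ≤ T) (hHi : ∀ z ∈ Hi, 0 ≤ t z ∧ t z ≤ τ)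
    (hτh : τ ≤ ∑ z ∈ Hi, t z) (hCh : C ≤ ∑ z ∈ Hi, t z)
    (hW : #Lo * T + C ≤ ∑ z ∈ Lo, t z + ∑ z ∈ Hi, t z) :
    #Lo * G T + G C ≤ ∑ z ∈ Lo, G (t z) + ∑ z ∈ Hi, G (t z) := by
  set h := ∑ z ∈ Hi, t z
  have hTτ : 0 < T - τ := by linarith
  have hmem : ∀ {x}, 0 ≤ x → x ∈ Set.Ici (0 : ℝ) := Set.mem_Ici.2
  obtain ⟨σ, hσ⟩ : ∃ σ, σ * (T - τ) = G T - G τ := ⟨_, div_mul_cancel₀ _ hTτ.ne'⟩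
  have hσ0 : 0 ≤ σ := by
    have := hGm (hmem hτ.le) (hmem (by linarith)) hτT.le
    nlinarith
  have hLo' : ∀ z ∈ Lo, G T - σ * (T - t z) ≤ G (t z) := by
    intro z hz
    obtain ⟨h1, h2⟩ := hLo z hz
    have := hG.sub_mul_add_sub_mul_le (hmem hτ.le) (hmem (by linarith)) h1 h2
    nlinarith
  have hHi' : ∀ z ∈ Hi, t z / τ * G τ ≤ G (t z) := by
    intro z hz
    obtain ⟨h1, h2⟩ := hHi z hz
    have := hG.mul_le_mul_of_map_zero hG0 h1 h2
    rw [div_mul_eq_mul_div, div_le_iff₀ hτ]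
    linarith
  have hC := hG.add_mul_sub_le_div_mul hG0 hτ hτT hσ hC0 hτh hCh
  have hLosum : ∑ z ∈ Lo, (G T - σ * (T - t z)) =
      #Lo * G T - σ * (#Lo * T) + σ * ∑ z ∈ Lo, t z := by
    simp only [sum_sub_distrib, mul_sub, sum_const, nsmul_eq_mul, mul_sum]
    ring
  calc #Lo * G T + G C ≤ #Lo * G T + G C + σ * (∑ z ∈ Lo, t z + h - (#Lo * T + C)) := by
        have := mul_nonneg hσ0 (sub_nonneg.2 hW)
        linarith
    _ = ∑ z ∈ Lo, (G T - σ * (T - t z)) + (G C + σ * (h - C)) := by rw [hLosum]; ring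
    _ ≤ ∑ z ∈ Lo, G (t z) + ∑ z ∈ Hi, t z / τ * G τ := by
        rw [← sum_mul, ← sum_div]
        exact add_le_add (sum_le_sum hLo') hC
    _ ≤ ∑ z ∈ Lo, G (t z) + ∑ z ∈ Hi, G (t z) := by gcongr with z hz; exact hHi' z hz

noncomputable def layeredFamily {r m : ℕ} (s : ℕ) (ψ : ℕ → ℝ) (x : Fin m → Fin r) : ℝ :=
  if ∀ i, (x i : ℕ) < s then ψ (countTop s x) else 0

section Words

variable {r s : ℕ}

lemma sum_fin_cons {m : ℕ} (F : (Fin (m + 1) → Fin r) → ℝ) :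
    ∑ x, F x = ∑ z, ∑ v, F (Fin.cons z v) := by
  rw [← Fintype.sum_prod_type']
  exact (Fintype.sum_equiv (Fin.consEquiv fun _ => Fin r) _ _ fun _ => rfl).symm

lemma sum_filter_val_lt_add_sum_filter_val_ge (a : ℕ) (g : Fin r → ℝ) :
    ∑ z ∈ univ.filter (fun z : Fin r => (z : ℕ) < a), g z +
      ∑ z ∈ univ.filter (fun z : Fin r => a ≤ (z : ℕ)), g z = ∑ z, g z := by
  simpa only [not_lt] using sum_filter_add_sum_filter_not univ (fun z : Fin r => (z : ℕ) < a) g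

lemma card_filter_lt_pred (hs : 1 ≤ s) (hsr : s ≤ r) :
    (#{z : Fin r | (z : ℕ) < s - 1} : ℝ) = (s : ℝ) - 1 := by
  rw [Fin.card_filter_val_lt, min_eq_right (by omega), Nat.cast_pred hs]

lemma sum_fin_eq_of_lt_pred (hs : 1 ≤ s) (hsr : s ≤ r) {g : Fin r → ℝ} {a : ℝ}
    (hlow : ∀ z : Fin r, (z : ℕ) < s - 1 → g z = a) (hhigh : ∀ z : Fin r, s ≤ (z : ℕ) → g z = 0) :
    ∑ z, g z = ((s : ℝ) - 1) * a + g ⟨s - 1, by omega⟩ := by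
  rw [← sum_filter_val_lt_add_sum_filter_val_ge (s - 1),
    sum_congr rfl fun z hz => hlow z (mem_filter.1 hz).2, sum_const, nsmul_eq_mul,
    card_filter_lt_pred hs hsr]
  congr 1
  refine sum_eq_single_of_mem _ (by simp; omega) fun z hz hne => hhigh z ?_
  have : (z : ℕ) ≠ s - 1 := fun h => hne (Fin.ext h)
  have := (mem_filter.1 hz).2
  omega

lemma countTop_insertNth {n : ℕ} (i : Fin (n + 1)) (y : Fin r) (w : Fin n → Fin r) :
    countTop s (Fin.insertNth i y w) = countTop s w + if (y : ℕ) = s - 1 then 1 else 0 := by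
  simp only [countTop, card_filter]
  rw [Fin.sum_univ_succAbove _ i, add_comm]
  simp [Fin.insertNth_apply_same, Fin.insertNth_apply_succAbove]

lemma layeredFamily_insertNth {n : ℕ} (ψ : ℕ → ℝ) (i : Fin (n + 1)) (y : Fin r)
    (w : Fin n → Fin r) :
    layeredFamily s ψ (Fin.insertNth i y w) =
      if (y : ℕ) < s then layeredFamily s (fun j => ψ (j + if (y : ℕ) = s - 1 then 1 else 0)) w
      else 0 := by
  simp only [layeredFamily, Fin.forall_iff_succAbove i, Fin.insertNth_apply_same,
    Fin.insertNth_apply_succAbove, countTop_insertNth]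
  split_ifs <;> simp_all

lemma layeredFamily_cons {n : ℕ} (ψ : ℕ → ℝ) (z : Fin r) (v : Fin n → Fin r) :
    layeredFamily s ψ (Fin.cons z v) =
      if (z : ℕ) < s then layeredFamily s (fun j => ψ (j + if (z : ℕ) = s - 1 then 1 else 0)) v
      else 0 := by
  rw [← Fin.insertNth_zero', layeredFamily_insertNth]

lemma sum_layeredFamily (hs : 1 ≤ s) (hsr : s ≤ r) (m : ℕ) (ψ : ℕ → ℝ) :
    ∑ x : Fin m → Fin r, layeredFamily s ψ x = layerSum s m ψ := by
  induction m generalizing ψ with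
  | zero => simp [layeredFamily, countTop, layerSum_zero]
  | succ m ih =>
    rw [sum_fin_cons, sum_fin_eq_of_lt_pred hs hsr (a := layerSum s m ψ), layerSum_succ, ← ih]
    · simp [layeredFamily_cons, show s - 1 < s by omega, ih]
    · intro z hz
      simp [layeredFamily_cons, show (z : ℕ) < s by omega, show (z : ℕ) ≠ s - 1 by omega, ih]
    · intro z hz
      simp [layeredFamily_cons, show ¬ (z : ℕ) < s by omega]

lemma fracBall_eq_layeredFamily (r m s k : ℕ) (α : ℝ) :
    fracBall r m s k α = layeredFamily s (thresholdProfile (k + 1) α) := by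
  ext x
  simp [fracBall, layeredFamily, thresholdProfile]

end Words

section Shadow

variable {r n : ℕ}

lemma le_fracShadow (f : (Fin (n + 1) → Fin r) → ℝ) (i : Fin (n + 1)) (y : Fin r)
    (w : Fin n → Fin r) : f (Fin.insertNth i y w) ≤ fracShadow f w :=
  le_ciSup (f := fun p : Fin (n + 1) × Fin r => f (Fin.insertNth p.1 p.2 w))
    (Set.finite_range _).bddAbove ⟨i, y⟩

lemma le_fracShadow_removeNth (f : (Fin (n + 1) → Fin r) → ℝ) (i : Fin (n + 1))
    (x : Fin (n + 1) → Fin r) : f x ≤ fracShadow f (Fin.removeNth i x) := by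
  simpa using le_fracShadow f i (x i) (Fin.removeNth i x)

lemma fracShadow_le [NeZero r] {f : (Fin (n + 1) → Fin r) → ℝ} {w : Fin n → Fin r} {a : ℝ}
    (h : ∀ i y, f (Fin.insertNth i y w) ≤ a) : fracShadow f w ≤ a :=
  ciSup_le fun p => h p.1 p.2

lemma fracShadow_nonneg [NeZero r] {f : (Fin (n + 1) → Fin r) → ℝ} (hf : ∀ x, 0 ≤ f x)
    (w : Fin n → Fin r) : 0 ≤ fracShadow f w :=
  (hf _).trans (le_fracShadow f 0 0 w)

lemma fracShadow_layeredFamily_le [NeZero r] {s : ℕ} {ψ : ℕ → ℝ} (hψ : Antitone ψ)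
    (hψ0 : ∀ j, 0 ≤ ψ j) (w : Fin n → Fin r) :
    fracShadow (layeredFamily s ψ) w ≤ layeredFamily s ψ w := by
  refine fracShadow_le fun i y => ?_
  rw [layeredFamily_insertNth]
  unfold layeredFamily
  split_ifs <;> first | exact hψ (Nat.le_add_right _ _) | exact hψ0 _ | exact le_rfl

end Shadow

noncomputable def fracShadowHead {r n : ℕ} (f : (Fin (n + 1) → Fin r) → ℝ) (w : Fin n → Fin r) :
    ℝ :=
  ⨆ z, f (Fin.cons z w)

section Slices

variable {r s n : ℕ}

lemma le_fracShadowHead (f : (Fin (n + 1) → Fin r) → ℝ) (z : Fin r) (w : Fin n → Fin r) :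
    f (Fin.cons z w) ≤ fracShadowHead f w :=
  le_ciSup (f := fun z => f (Fin.cons z w)) (Set.finite_range _).bddAbove z

lemma fracShadowHead_le_fracShadow [NeZero r] (f : (Fin (n + 1) → Fin r) → ℝ)
    (w : Fin n → Fin r) : fracShadowHead f w ≤ fracShadow f w :=
  ciSup_le fun z => by simpa [Fin.insertNth_zero'] using le_fracShadow f 0 z w

lemma sum_fracShadowHead_le_sum_fracShadow [NeZero r] (f : (Fin (n + 1) → Fin r) → ℝ) :
    ∑ w, fracShadowHead f w ≤ ∑ w, fracShadow f w :=
  sum_le_sum fun w _ => fracShadowHead_le_fracShadow f w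

lemma sum_cons_le_sum_fracShadowHead (f : (Fin (n + 1) → Fin r) → ℝ) (z : Fin r) :
    ∑ v, f (Fin.cons z v) ≤ ∑ w, fracShadowHead f w :=
  sum_le_sum fun w _ => le_fracShadowHead f z w

lemma sum_le_sum_fracShadowHead_add (hs : 1 ≤ s) (hsr : s ≤ r) (f : (Fin (n + 1) → Fin r) → ℝ) :
    ∑ x, f x ≤ ((s : ℝ) - 1) * ∑ w, fracShadowHead f w +
      ∑ z ∈ univ.filter fun z : Fin r => s - 1 ≤ (z : ℕ), ∑ v, f (Fin.cons z v) := by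
  rw [sum_fin_cons, ← sum_filter_val_lt_add_sum_filter_val_ge (s - 1)]
  gcongr
  rw [sum_comm, ← card_filter_lt_pred hs hsr, mul_sum]
  gcongr with w
  simpa using sum_le_sum fun z (_ : z ∈ ({z : Fin r | (z : ℕ) < s - 1} : Finset _)) =>
    le_fracShadowHead f z w

lemma le_sum_fracShadowHead (hs : 2 ≤ s) (hsr : s ≤ r) {f : (Fin (n + 1) → Fin r) → ℝ} {T C : ℝ}
    (hW : ((s : ℝ) - 1) * T + C ≤ ∑ x, f x)
    (hhigh : ∑ z ∈ univ.filter fun z : Fin r => s - 1 ≤ (z : ℕ), ∑ v, f (Fin.cons z v) ≤ C) :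
    T ≤ ∑ w, fracShadowHead f w := by
  have := sum_le_sum_fracShadowHead_add (by omega) hsr f
  have : (1 : ℝ) < s := by exact_mod_cast hs
  nlinarith

lemma SCompressed.slice {f : (Fin (n + 1) → Fin r) → ℝ} (hc : SCompressed s f) (z : Fin r) :
    SCompressed s fun v : Fin n → Fin r => f (Fin.cons z v) := by
  intro x i y hx hyx hsx
  simpa [← Fin.cons_update] using hc (Fin.cons z x) i.succ y hx hyx hsx

lemma SCompressed.apply_cons_le {f : (Fin (n + 1) → Fin r) → ℝ} (hc : SCompressed s f)
    (hf0 : ∀ x, 0 ≤ f x) (hf1 : ∀ x, f x ≤ 1) {z z' : Fin r} (hzz : z' < z) (hz : s ≤ (z : ℕ) + 1)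
    (v : Fin n → Fin r) : f (Fin.cons z v) ≤ f (Fin.cons z' v) := by
  rcases (hf0 (Fin.cons z v)).eq_or_lt with h | h
  · exact h ▸ hf0 _
  · have := hc (Fin.cons z v) 0 z' h hzz hz
    rw [Fin.update_cons_zero] at this
    exact this ▸ hf1 _

lemma SCompressed.sum_cons_le_sum_cons {f : (Fin (n + 1) → Fin r) → ℝ} (hc : SCompressed s f)
    (hf0 : ∀ x, 0 ≤ f x) (hf1 : ∀ x, f x ≤ 1) {z z' : Fin r} (hzz : z' < z) (hz : s - 1 ≤ (z : ℕ)) :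
    ∑ v, f (Fin.cons z v) ≤ ∑ v, f (Fin.cons z' v) :=
  sum_le_sum fun v _ => hc.apply_cons_le hf0 hf1 hzz (by omega) v

lemma one_le_sum_fracShadowHead (hs : 2 ≤ s) {f : (Fin (n + 1) → Fin r) → ℝ} (hf0 : ∀ x, 0 ≤ f x)
    (hc : SCompressed s f)
    (hpos : 0 < ∑ z ∈ univ.filter fun z : Fin r => s - 1 ≤ (z : ℕ), ∑ v, f (Fin.cons z v)) :
    1 ≤ ∑ w, fracShadowHead f w := by
  obtain ⟨z, hzhigh, hz'⟩ := exists_lt_of_sum_lt (f := fun _ => (0 : ℝ)) (by simpa using hpos)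
  obtain ⟨v, -, hv⟩ := exists_lt_of_sum_lt (f := fun _ => (0 : ℝ)) (by simpa using hz')
  have hz : s ≤ (z : ℕ) + 1 := (mem_filter.1 hzhigh).2
  have h0 : (⟨0, by omega⟩ : Fin r) < z := Fin.lt_def.2 (by simp; omega)
  have := hc (Fin.cons z v) 0 _ hv h0 (by simp; omega)
  rw [Fin.update_cons_zero] at this
  calc 1 = f (Fin.cons ⟨0, by omega⟩ v) := this.symm
    _ ≤ fracShadowHead f v := le_fracShadowHead f _ v
    _ ≤ ∑ w, fracShadowHead f w :=
      single_le_sum (fun w _ => (hf0 _).trans (le_fracShadowHead f z w)) (mem_univ v)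

lemma sum_sum_fracShadow_slice_le [NeZero r] (f : (Fin (n + 2) → Fin r) → ℝ) :
    ∑ z, ∑ v, fracShadow (fun v' => f (Fin.cons z v')) v ≤ ∑ w, fracShadow f w := by
  rw [sum_fin_cons (fun w => fracShadow f w)]
  gcongr with z _ v
  refine fracShadow_le fun i y => ?_
  rw [← Fin.insertNth_succ_cons]
  exact le_fracShadow f i.succ y _

end Slices

section Induction

variable {r s : ℕ} [NeZero r]

lemma layerSum_zero_le_sum_fracShadow (hs : 2 ≤ s) (hsr : s ≤ r) {f : (Fin 1 → Fin r) → ℝ}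
    (hf0 : ∀ x, 0 ≤ f x) (hc : SCompressed s f) {ψ : ℕ → ℝ} (hψ0 : ∀ j, 0 ≤ ψ j)
    (hψ1 : ∀ j, ψ j ≤ 1) (hW : layerSum s 1 ψ ≤ ∑ x, f x) :
    layerSum s 0 ψ ≤ ∑ w, fracShadow f w := by
  refine le_trans ?_ (sum_fracShadowHead_le_sum_fracShadow f)
  rw [layerSum_succ] at hW
  by_cases hhigh : ∑ z ∈ univ.filter fun z : Fin r => s - 1 ≤ (z : ℕ), ∑ v, f (Fin.cons z v) ≤
      layerSum s 0 fun j => ψ (j + 1)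
  · exact le_sum_fracShadowHead hs hsr hW hhigh
  · have hpos := (layerSum_nonneg (by omega) fun j => hψ0 (j + 1)).trans_lt (not_le.1 hhigh)
    calc layerSum s 0 ψ ≤ 1 := by simpa using layerSum_le_pow (m := 0) (by omega) hψ1
      _ ≤ _ := one_le_sum_fracShadowHead hs hf0 hc hpos

/-- If some slice weighs at least `T`, or the slices at symbols `≥ s` weigh at most `C` in total,
the shadow in the first direction alone has weight `T`; otherwise the shadows of the slices do,
by `ConcaveOn.card_mul_add_le_sum`. -/
lemma le_sum_fracShadow_of_slices (hs : 2 ≤ s) (hsr : s ≤ r) {n : ℕ}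
    {f : (Fin (n + 2) → Fin r) → ℝ} (hf0 : ∀ x, 0 ≤ f x) (hf1 : ∀ x, f x ≤ 1)
    (hc : SCompressed s f) {G : ℝ → ℝ} (hG : ConcaveOn ℝ (Set.Ici 0) G)
    (hGm : MonotoneOn G (Set.Ici 0)) (hG0 : G 0 = 0) {T C : ℝ} (hC0 : 0 ≤ C)
    (hW : ((s : ℝ) - 1) * T + C ≤ ∑ x, f x) (hT : T ≤ ((s : ℝ) - 1) * G T + G C)
    (hslice : ∀ z, ∑ v, f (Fin.cons z v) < T →
      G (∑ v, f (Fin.cons z v)) ≤ ∑ w, fracShadow (fun v => f (Fin.cons z v)) w) :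
    T ≤ ∑ w, fracShadow f w := by
  set t : Fin r → ℝ := fun z => ∑ v, f (Fin.cons z v)
  by_cases hheavy : ∃ z, T ≤ t z
  · obtain ⟨z, hz⟩ := hheavy
    exact hz.trans ((sum_cons_le_sum_fracShadowHead f z).trans
      (sum_fracShadowHead_le_sum_fracShadow f))
  push Not at hheavy
  set Lo := univ.filter fun z : Fin r => (z : ℕ) < s - 1
  set Hi := univ.filter fun z : Fin r => s - 1 ≤ (z : ℕ)
  by_cases hhigh : ∑ z ∈ Hi, t z ≤ C
  · exact (le_sum_fracShadowHead hs hsr hW hhigh).trans (sum_fracShadowHead_le_sum_fracShadow f)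
  push Not at hhigh
  set top : Fin r := ⟨s - 1, by omega⟩
  have htop : top ∈ Hi := by simp [Hi, top]; omega
  have hHi : ∀ z ∈ Hi, 0 ≤ t z ∧ t z ≤ t top := by
    intro z hz
    have hz : s - 1 ≤ (z : ℕ) := (mem_filter.1 hz).2
    refine ⟨sum_nonneg fun v _ => hf0 _, ?_⟩
    rcases hz.lt_or_eq with hlt | heq
    · exact hc.sum_cons_le_sum_cons hf0 hf1 (Fin.lt_def.2 hlt) hz
    · exact le_of_eq (congrArg t (Fin.ext heq.symm))
  have hLo : ∀ z ∈ Lo, t top ≤ t z ∧ t z ≤ T := fun z hz =>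
    ⟨hc.sum_cons_le_sum_cons hf0 hf1 (Fin.lt_def.2 (mem_filter.1 hz).2) le_rfl, (hheavy z).le⟩
  have hτ : 0 < t top := by
    by_contra! h
    have := sum_nonpos fun z hz => (hHi z hz).2.trans h
    linarith
  have hcard : (#Lo : ℝ) = (s : ℝ) - 1 := card_filter_lt_pred (by omega) hsr
  have key := hG.card_mul_add_le_sum hG0 hGm hτ (hheavy top) hC0 hLo hHi
    (single_le_sum (fun z hz => (hHi z hz).1) htop) hhigh.le
    (by rw [hcard, sum_filter_val_lt_add_sum_filter_val_ge, ← sum_fin_cons]; exact hW)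
  rw [hcard, sum_filter_val_lt_add_sum_filter_val_ge] at key
  calc T ≤ ((s : ℝ) - 1) * G T + G C := hT
    _ ≤ ∑ z, G (t z) := key
    _ ≤ ∑ z, ∑ w, fracShadow (fun v => f (Fin.cons z v)) w :=
      sum_le_sum fun z _ => hslice z (hheavy z)
    _ ≤ ∑ w, fracShadow f w := sum_sum_fracShadow_slice_le f

theorem layerSum_le_sum_fracShadow (hs : 2 ≤ s) (hsr : s ≤ r) (n : ℕ)
    {f : (Fin (n + 1) → Fin r) → ℝ} (hf0 : ∀ x, 0 ≤ f x) (hf1 : ∀ x, f x ≤ 1)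
    (hc : SCompressed s f) {ψ : ℕ → ℝ} (hψ : Antitone ψ) (hψ0 : ∀ j, 0 ≤ ψ j)
    (hψ1 : ∀ j, ψ j ≤ 1) (hW : layerSum s (n + 1) ψ ≤ ∑ x, f x) :
    layerSum s n ψ ≤ ∑ w, fracShadow f w := by
  induction n generalizing ψ with
  | zero => exact layerSum_zero_le_sum_fracShadow hs hsr hf0 hc hψ0 hψ1 hW
  | succ n ih =>
    have hψ0' : ∀ j, 0 ≤ ψ (j + 1) := fun j => hψ0 (j + 1)
    have hψ1' : ∀ j, ψ (j + 1) ≤ 1 := fun j => hψ1 (j + 1)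
    refine le_sum_fracShadow_of_slices hs hsr hf0 hf1 hc
      ((concaveOn_shadowProfile s n).subset (Set.subset_univ _) (convex_Ici 0))
      ((monotone_shadowProfile (by omega)).monotoneOn _) (shadowProfile_zero hs)
      (layerSum_nonneg (s := s) (by omega) hψ0') (by rwa [← layerSum_succ]) ?_ fun z hz => ?_
    · have h1 := layerSum_le_shadowProfile (n := n) hs hψ0 hψ1
      have h2 := layerSum_le_shadowProfile (n := n) hs hψ0' hψ1'
      have : (0 : ℝ) ≤ (s : ℝ) - 1 := by linarith [show (2 : ℝ) ≤ s by exact_mod_cast hs]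
      linarith [layerSum_succ s n ψ, mul_le_mul_of_nonneg_left h1 this]
    · obtain ⟨K, α, hK, hα0, hα1, heq⟩ := exists_layerSum_threshold_eq hs
        (sum_nonneg fun v _ => hf0 _) (hz.le.trans (layerSum_le_pow (by omega) hψ1))
      rw [← heq]
      exact (shadowProfile_layerSum_threshold_le hs hK α).trans
        (ih (fun _ => hf0 _) (fun _ => hf1 _) (hc.slice z) (thresholdProfile_antitone hα0 hα1 K)
          (thresholdProfile_nonneg hα0 K) (thresholdProfile_le_one hα1 K) heq.le)

lemma sum_fracShadow_fracBall_le (hs : 2 ≤ s) (hsr : s ≤ r) {n k : ℕ} {α : ℝ} (hα0 : 0 ≤ α)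
    (hα1 : α ≤ 1) {f : (Fin (n + 1) → Fin r) → ℝ} (hf0 : ∀ x, 0 ≤ f x) (hf1 : ∀ x, f x ≤ 1)
    (hc : SCompressed s f) (hsame : ∑ x, fracBall r (n + 1) s k α x = ∑ x, f x) :
    ∑ w, fracShadow (fracBall r (n + 1) s k α) w ≤ ∑ w, fracShadow f w := by
  have hψ0 := thresholdProfile_nonneg hα0 (k + 1)
  have hψ := thresholdProfile_antitone hα0 hα1 (k + 1)
  rw [fracBall_eq_layeredFamily] at hsame ⊢
  rw [sum_layeredFamily (by omega) hsr] at hsame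
  calc _ ≤ ∑ w, layeredFamily s (thresholdProfile (k + 1) α) w :=
        sum_le_sum fun w _ => fracShadow_layeredFamily_le hψ hψ0 w
    _ = layerSum s n (thresholdProfile (k + 1) α) := sum_layeredFamily (by omega) hsr n _
    _ ≤ _ := layerSum_le_sum_fracShadow hs hsr n hf0 hf1 hc hψ hψ0
        (thresholdProfile_le_one hα1 _) hsame.le

end Induction

section TopSymbolOne

variable {r n : ℕ} [NeZero r]

lemma sum_fracShadow_le_of_eq_zero {g : (Fin (n + 1) → Fin r) → ℝ} (hg0 : ∀ x, 0 ≤ g x)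
    (hg : ∀ x, x ≠ 0 → g x = 0) : ∑ w, fracShadow g w ≤ g 0 := by
  calc ∑ w, fracShadow g w ≤ ∑ w : Fin n → Fin r, if w = 0 then g 0 else 0 := by
        refine sum_le_sum fun w _ => fracShadow_le fun i y => ?_
        rcases eq_or_ne (Fin.insertNth (α := fun _ => Fin r) i y w) 0 with h | h
        · have hw : w = 0 := funext fun j => by simpa using congrFun h (i.succAbove j)
          simp [hw, ← h]
        · rw [hg _ h]
          split_ifs <;> simp [hg0]
    _ = g 0 := by simp

lemma min_one_le_sum_fracShadow {f : (Fin (n + 1) → Fin r) → ℝ} (hf0 : ∀ x, 0 ≤ f x)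
    (hc : SCompressed 1 f) : min 1 (∑ x, f x) ≤ ∑ w, fracShadow f w := by
  have hle : ∀ x, f x ≤ ∑ w, fracShadow f w := fun x =>
    (le_fracShadow_removeNth f 0 x).trans
      (single_le_sum (fun w _ => fracShadow_nonneg hf0 w) (mem_univ _))
  by_cases h : ∃ x i, 0 < f x ∧ x i ≠ 0
  · obtain ⟨x, i, hx, hxi⟩ := h
    have := hc x i 0 hx (Fin.pos_iff_ne_zero.2 hxi) (by omega)
    exact (min_le_left _ _).trans (this ▸ hle _)
  · push Not at h
    have hsupp : ∑ x, f x = f 0 := Fintype.sum_eq_single 0 fun x hx => by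
      by_contra hne
      exact hx (funext fun i => h x i ((hf0 x).lt_of_ne' hne))
    exact (min_le_right _ _).trans (hsupp ▸ hle 0)

lemma fracBall_one_eq_zero (k : ℕ) (α : ℝ) {x : Fin (n + 1) → Fin r} (hx : x ≠ 0) :
    fracBall r (n + 1) 1 k α x = 0 := by
  refine if_neg fun hlt => hx (funext fun i => Fin.ext ?_)
  simpa using hlt i

lemma sum_fracShadow_fracBall_one_le {k : ℕ} {α : ℝ} (hα0 : 0 ≤ α) (hα1 : α ≤ 1)
    {f : (Fin (n + 1) → Fin r) → ℝ} (hf0 : ∀ x, 0 ≤ f x) (hc : SCompressed 1 f)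
    (hsame : ∑ x, fracBall r (n + 1) 1 k α x = ∑ x, f x) :
    ∑ w, fracShadow (fracBall r (n + 1) 1 k α) w ≤ ∑ w, fracShadow f w := by
  have hb0 : ∀ x, 0 ≤ fracBall r (n + 1) 1 k α x := fun x => by
    unfold fracBall; split_ifs <;> linarith
  have hb1 : fracBall r (n + 1) 1 k α 0 ≤ 1 := by
    unfold fracBall; split_ifs <;> linarith
  calc _ ≤ fracBall r (n + 1) 1 k α 0 :=
        sum_fracShadow_le_of_eq_zero hb0 fun x hx => fracBall_one_eq_zero k α hx
    _ ≤ min 1 (∑ x, f x) := le_min hb1 (hsame ▸ single_le_sum (fun x _ => hb0 x) (mem_univ 0))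
    _ ≤ _ := min_one_le_sum_fracShadow hf0 hc

end TopSymbolOne

theorem fracShadow_min_general (r n s k : ℕ) (α : ℝ) (hs1 : 1 ≤ s) (hsr : s ≤ r)
    (f : (Fin (n+1) → Fin r) → ℝ) (hf : ∀ w, f w ∈ Set.Icc (0:ℝ) 1)
    (hcomp : SCompressed s f)
    (hα : α ∈ Set.Icc (0:ℝ) 1)
    (hsame : ∑ w : Fin (n+1) → Fin r, fracBall r (n+1) s k α w =
      ∑ w : Fin (n+1) → Fin r, f w) :
    ∑ w : Fin n → Fin r, fracShadow (fracBall r (n+1) s k α) w ≤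
      ∑ w : Fin n → Fin r, fracShadow f w := by
  obtain ⟨hα0, hα1⟩ := hα
  have : NeZero r := ⟨by omega⟩
  rcases hs1.eq_or_lt with rfl | hs
  · exact sum_fracShadow_fracBall_one_le hα0 hα1 (fun x => (hf x).1) hcomp hsame
  · exact sum_fracShadow_fracBall_le hs hsr hα0 hα1 (fun x => (hf x).1) (fun x => (hf x).2) hcomp
      hsame

/-- If `f` is an `s`-compressed fractional family of weight at most `sⁿ` and `h`
is the fractional Hamming ball of the same weight, then `|Δf| ≥ |Δh|`. -/
theorem fracShadow_min (r n s k : ℕ) (α : ℝ) (hs1 : 1 ≤ s) (hsr : s ≤ r)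
    (f : (Fin (n+1) → Fin r) → ℝ) (hf : ∀ w, f w ∈ Set.Icc (0:ℝ) 1)
    (hcomp : SCompressed s f)
    (hwle : ∑ w : Fin (n+1) → Fin r, f w ≤ (s : ℝ) ^ (n+1))
    (hα : α ∈ Set.Icc (0:ℝ) 1)
    (hsame : ∑ w : Fin (n+1) → Fin r, fracBall r (n+1) s k α w =
      ∑ w : Fin (n+1) → Fin r, f w) :
    ∑ w : Fin n → Fin r, fracShadow (fracBall r (n+1) s k α) w ≤
      ∑ w : Fin n → Fin r, fracShadow f w :=
  fracShadow_min_general r n s k α hs1 hsr f hf hcomp hα hsame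
end
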